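/- arXiv:math/9411231 — 2 statements merged into one kernel-verified Lean document; each statement's English description precedes it below -/
import Mathlib

section
/- For 0 < q < 1, nonnegative integers α, β and the q-beta integral: ∫_0^1 x^α (qx; q)_β d_q x = (1-q) (q;q)_α (q;q)_β / (q;q)_{α+β+1}. -/
/-!
Writing `x = q^k`, the Jackson integral is `(1 - q) S(α, β)` with
`S(α, β) = ∑_k q^{k(α+1)} (q^{k+1}; q)_β`. Peeling off the last factor
`1 - q^{k+1} q^β` of the Pochhammer symbol gives the recurrence
`S(α, β + 1) = S(α, β) - q^{β+1} S(α + 1, β)`, and `S(α, 0)` is a geometric series;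
induction on `β` then yields `S(α, β) = (q;q)_α (q;q)_β / (q;q)_{α+β+1}`.
-/

/-- The Jackson q-integral `∫_0^c f(x) d_q x = c(1-q) ∑_{k=0}^∞ f(c q^k) q^k`. -/
noncomputable def jacksonIntegral (q c : ℝ) (f : ℝ → ℝ) : ℝ :=
  c * (1 - q) * ∑' k : ℕ, f (c * q ^ k) * q ^ k

/-- The finite q-Pochhammer symbol `(a;q)_m = ∏_{k=0}^{m-1} (1 - a q^k)`. -/
noncomputable def qPoch (a q : ℝ) (m : ℕ) : ℝ :=
  ∏ k ∈ Finset.range m, (1 - a * q ^ k)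

@[simp]
lemma qPoch_zero (a q : ℝ) : qPoch a q 0 = 1 :=
  Finset.prod_range_zero _

lemma qPoch_succ (a q : ℝ) (m : ℕ) : qPoch a q (m + 1) = qPoch a q m * (1 - a * q ^ m) :=
  Finset.prod_range_succ _ _

lemma qPoch_self_succ (q : ℝ) (m : ℕ) :
    qPoch q q (m + 1) = qPoch q q m * (1 - q ^ (m + 1)) := by
  rw [qPoch_succ, ← pow_succ']

section QPoch

variable {a q : ℝ}

lemma mul_pow_mem_Ico (ha0 : 0 ≤ a) (ha1 : a < 1) (hq0 : 0 ≤ q) (hq1 : q ≤ 1) (k : ℕ) :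
    a * q ^ k ∈ Set.Ico 0 1 :=
  ⟨by positivity, (mul_le_of_le_one_right ha0 (pow_le_one₀ hq0 hq1)).trans_lt ha1⟩

lemma qPoch_pos (ha0 : 0 ≤ a) (ha1 : a < 1) (hq0 : 0 ≤ q) (hq1 : q ≤ 1) (m : ℕ) :
    0 < qPoch a q m :=
  Finset.prod_pos fun k _ => sub_pos.2 (mul_pow_mem_Ico ha0 ha1 hq0 hq1 k).2

lemma qPoch_le_one (ha0 : 0 ≤ a) (ha1 : a < 1) (hq0 : 0 ≤ q) (hq1 : q ≤ 1) (m : ℕ) :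
    qPoch a q m ≤ 1 :=
  Finset.prod_le_one (fun k _ => sub_nonneg.2 (mul_pow_mem_Ico ha0 ha1 hq0 hq1 k).2.le)
    fun k _ => sub_le_self _ (mul_pow_mem_Ico ha0 ha1 hq0 hq1 k).1

end QPoch

noncomputable def qBetaSum (q : ℝ) (α β : ℕ) : ℝ :=
  ∑' k : ℕ, (q ^ (α + 1)) ^ k * qPoch (q ^ (k + 1)) q β

section QBetaSum

variable {q : ℝ}

lemma summable_qBetaSum (hq0 : 0 < q) (hq1 : q < 1) (α β : ℕ) :
    Summable fun k : ℕ => (q ^ (α + 1)) ^ k * qPoch (q ^ (k + 1)) q β := by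
  have hr : q ^ (α + 1) < 1 := pow_lt_one₀ hq0.le hq1 α.succ_ne_zero
  have hpow : ∀ k : ℕ, q ^ (k + 1) < 1 := fun k => pow_lt_one₀ hq0.le hq1 k.succ_ne_zero
  refine (summable_geometric_of_lt_one (by positivity) hr).of_nonneg_of_le
    (fun k => mul_nonneg (by positivity) (qPoch_pos (by positivity) (hpow k) hq0.le hq1.le β).le)
    fun k => mul_le_of_le_one_right (by positivity)
      (qPoch_le_one (by positivity) (hpow k) hq0.le hq1.le β)

lemma qBetaSum_zero (hq0 : 0 < q) (hq1 : q < 1) (α : ℕ) :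
    qBetaSum q α 0 = (1 - q ^ (α + 1))⁻¹ := by
  simp only [qBetaSum, qPoch_zero, mul_one]
  exact tsum_geometric_of_lt_one (by positivity) (pow_lt_one₀ hq0.le hq1 α.succ_ne_zero)

lemma qBetaSum_succ (hq0 : 0 < q) (hq1 : q < 1) (α β : ℕ) :
    qBetaSum q α (β + 1) = qBetaSum q α β - q ^ (β + 1) * qBetaSum q (α + 1) β := by
  rw [qBetaSum, qBetaSum, qBetaSum, ← tsum_mul_left,
    ← (summable_qBetaSum hq0 hq1 α β).tsum_sub
      ((summable_qBetaSum hq0 hq1 (α + 1) β).mul_left _)]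
  refine tsum_congr fun k => ?_
  rw [qPoch_succ]
  ring

lemma qBetaSum_eq (hq0 : 0 < q) (hq1 : q < 1) (α β : ℕ) :
    qBetaSum q α β = qPoch q q α * qPoch q q β / qPoch q q (α + β + 1) := by
  have hP : ∀ m, qPoch q q m ≠ 0 := fun m => (qPoch_pos hq0.le hq1 hq0.le hq1.le m).ne'
  have hD : ∀ m, 1 - q ^ (m + 1) ≠ 0 := fun m =>
    (sub_pos.2 (pow_lt_one₀ hq0.le hq1 m.succ_ne_zero)).ne'
  induction β generalizing α with
  | zero =>
    rw [qBetaSum_zero hq0 hq1, add_zero, qPoch_self_succ, qPoch_zero]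
    field_simp [hP α, hD α]
  | succ β ih =>
    rw [qBetaSum_succ hq0 hq1, ih, ih, show α + 1 + β + 1 = α + β + 1 + 1 by ring,
      show α + (β + 1) + 1 = α + β + 1 + 1 by ring, qPoch_self_succ q α, qPoch_self_succ q β,
      qPoch_self_succ q (α + β + 1)]
    field_simp [hP, hD]
    ring

end QBetaSum

lemma jacksonIntegral_qBeta (q : ℝ) (α β : ℕ) :
    jacksonIntegral q 1 (fun x => x ^ α * qPoch (q * x) q β) = (1 - q) * qBetaSum q α β := by
  rw [jacksonIntegral, qBetaSum, one_mul]
  congr 1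
  refine tsum_congr fun k => ?_
  rw [one_mul, ← pow_succ']
  ring

/-- The q-beta integral: for `0 < q < 1` and nonnegative integers `α, β`,
`∫_0^1 x^α (qx; q)_β d_q x = (1-q) (q;q)_α (q;q)_β / (q;q)_{α+β+1}`. -/
theorem jackson_qbeta (q : ℝ) (hq0 : 0 < q) (hq1 : q < 1) (α β : ℕ) :
    jacksonIntegral q 1 (fun x => x ^ α * qPoch (q * x) q β) =
      (1 - q) * qPoch q q α * qPoch q q β / qPoch q q (α + β + 1) := by
  rw [jacksonIntegral_qBeta, qBetaSum_eq hq0 hq1]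
  ring
end

section
/- In the algebra Z_n, for each 1 ≤ i ≤ n and all m, p ≥ 0, the element w_i^m z_i^p can be written as ∑_{k=0}^{min(m,p)} d_k z_i^{p−k} w_i^{m−k} Q_i^k for some coefficients d_k ∈ ℂ[q²]. -/
noncomputable section

/-- Free algebra on generators `z_1,…,z_n, w_1,…,w_n`. -/
abbrev FreeZW (n : ℕ) := FreeAlgebra ℂ (Fin n ⊕ Fin n)

/-- Generator `z_i`. -/
def zGen (n : ℕ) (i : Fin n) : FreeZW n := FreeAlgebra.ι ℂ (Sum.inl i)

/-- Generator `w_i`. -/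
def wGen (n : ℕ) (i : Fin n) : FreeZW n := FreeAlgebra.ι ℂ (Sum.inr i)

/-- The defining relations of the quantized algebra of polynomials on `ℂ^n`:
`z_i z_j = q z_j z_i` (i<j), `w_j w_i = q w_i w_j` (i<j), `w_i z_j = q z_j w_i` (i≠j),
`w_i z_i = z_i w_i + (1-q²) ∑_{k<i} z_k w_k`. -/
inductive ZRel (n : ℕ) (q : ℝ) : FreeZW n → FreeZW n → Prop
  | zz {i j : Fin n} (h : i < j) :
      ZRel n q (zGen n i * zGen n j) ((q : ℂ) • (zGen n j * zGen n i))
  | ww {i j : Fin n} (h : i < j) :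
      ZRel n q (wGen n j * wGen n i) ((q : ℂ) • (wGen n i * wGen n j))
  | wz {i j : Fin n} (h : i ≠ j) :
      ZRel n q (wGen n i * zGen n j) ((q : ℂ) • (zGen n j * wGen n i))
  | wzDiag (i : Fin n) :
      ZRel n q (wGen n i * zGen n i)
        (zGen n i * wGen n i +
          (1 - (q : ℂ) ^ 2) • ∑ k ∈ Finset.univ.filter (· < i), zGen n k * wGen n k)

/-- The quantized algebra `Z_n` of polynomials on `ℂ^n`. -/
abbrev ZAlg (n : ℕ) (q : ℝ) := RingQuot (ZRel n q)

/-- The generator `z_i` of `Z_n`. -/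
def zEl (n : ℕ) (q : ℝ) (i : Fin n) : ZAlg n q :=
  RingQuot.mkAlgHom ℂ (ZRel n q) (zGen n i)

/-- The generator `w_i` of `Z_n`. -/
def wEl (n : ℕ) (q : ℝ) (i : Fin n) : ZAlg n q :=
  RingQuot.mkAlgHom ℂ (ZRel n q) (wGen n i)

/-- The monomial `z^λ w^μ = z_1^{λ_1} ⋯ z_n^{λ_n} w_n^{μ_n} ⋯ w_1^{μ_1}` in `Z_n`. -/
def zwMono (n : ℕ) (q : ℝ) (lam mu : Fin n → ℕ) : ZAlg n q :=
  (List.ofFn fun i : Fin n => zEl n q i ^ lam i).prod *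
    (List.ofFn fun i : Fin n => wEl n q i.rev ^ mu i.rev).prod

/-- The central element `Q_i = ∑_{k=1}^{i} z_k w_k` (here `i : ℕ`, summing over the first
`i` indices; `Q_0 = 0`). -/
def QEl (n : ℕ) (q : ℝ) (i : ℕ) : ZAlg n q :=
  ∑ k ∈ Finset.univ.filter (fun k : Fin n => (k : ℕ) < i), zEl n q k * wEl n q k


/-! With `t = q²`, moving `w` past `z` once gives
`w^(m+1) z = t^(m+1) z w^(m+1) + (1 - t^(m+1)) Q w^m`. Since `Q` commutes with `z` and `w`,
induction on `p` then keeps `w^m z^p` a normally ordered sum whose coefficients are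
polynomials in `t`. -/

section NormalOrdering

open Polynomial

variable {R A : Type*} [CommRing R] [Ring A] [Algebra R A]

def IsNormalOrderedSum (t : R) (z w Q : A) (m p : ℕ) (x : A) : Prop :=
  ∃ d : ℕ → R[X], x = ∑ k ∈ Finset.range (min m p + 1),
    (d k).eval t • (z ^ (p - k) * w ^ (m - k) * Q ^ k)

namespace IsNormalOrderedSum

variable {t : R} {z w Q : A} {m p : ℕ} {x y : A}

theorem add (hx : IsNormalOrderedSum t z w Q m p x) (hy : IsNormalOrderedSum t z w Q m p y) :
    IsNormalOrderedSum t z w Q m p (x + y) := by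
  obtain ⟨d, rfl⟩ := hx
  obtain ⟨e, rfl⟩ := hy
  exact ⟨d + e, by simp only [Pi.add_apply, eval_add, add_smul, Finset.sum_add_distrib]⟩

theorem eval_smul (f : R[X]) (hx : IsNormalOrderedSum t z w Q m p x) :
    IsNormalOrderedSum t z w Q m p (f.eval t • x) := by
  obtain ⟨d, rfl⟩ := hx
  exact ⟨fun k => f * d k, by simp only [eval_mul, mul_smul, Finset.smul_sum]⟩

-- The new term `k = p + 1`, present when `p < m`, gets coefficient `0`.
theorem z_mul (hx : IsNormalOrderedSum t z w Q m p x) :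
    IsNormalOrderedSum t z w Q m (p + 1) (z * x) := by
  obtain ⟨d, rfl⟩ := hx
  refine ⟨fun k => if k ≤ p then d k else 0, ?_⟩
  rw [Finset.mul_sum]
  refine Eq.trans ?_ (Finset.sum_subset (Finset.range_subset_range.2
    (show min m p + 1 ≤ min m (p + 1) + 1 by omega)) ?_)
  · refine Finset.sum_congr rfl fun k hk => ?_
    have hkp : k ≤ p := by have := Finset.mem_range.1 hk; omega
    dsimp only
    rw [if_pos hkp, mul_smul_comm, ← mul_assoc, ← mul_assoc, ← pow_succ', Nat.succ_sub hkp]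
  · intro k hk hk'
    have hkp : ¬k ≤ p := by
      simp only [Finset.mem_range] at hk hk'
      omega
    dsimp only
    rw [if_neg hkp, eval_zero, zero_smul]

theorem Q_mul (hQz : Commute Q z) (hQw : Commute Q w) (hx : IsNormalOrderedSum t z w Q m p x) :
    IsNormalOrderedSum t z w Q (m + 1) (p + 1) (Q * x) := by
  obtain ⟨d, rfl⟩ := hx
  refine ⟨fun k => Nat.casesOn k 0 d, ?_⟩
  rw [Nat.add_min_add_right, Finset.sum_range_succ' _ (min m p + 1), Finset.mul_sum]
  simp only [Nat.rec_zero, eval_zero, zero_smul, add_zero, Nat.add_sub_add_right]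
  refine Finset.sum_congr rfl fun k _ => ?_
  have hQ : Commute Q (z ^ (p - k) * w ^ (m - k) * Q ^ k) :=
    ((hQz.pow_right _).mul_right (hQw.pow_right _)).mul_right (Commute.self_pow Q k)
  rw [mul_smul_comm, hQ.eq, mul_assoc _ (Q ^ k), ← pow_succ]

end IsNormalOrderedSum

variable {t : R} {z w Q : A}

theorem pow_succ_mul_eq_of_mul_eq (hQw : Commute Q w)
    (hwz : w * z = t • (z * w) + (1 - t) • Q) (m : ℕ) :
    w ^ (m + 1) * z = t ^ (m + 1) • (z * w ^ (m + 1)) + (1 - t ^ (m + 1)) • (Q * w ^ m) := by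
  induction m with
  | zero => simpa using hwz
  | succ m ih =>
    calc w ^ (m + 2) * z = w * (w ^ (m + 1) * z) := by rw [pow_succ', mul_assoc]
      _ = t ^ (m + 1) • (w * z * w ^ (m + 1)) + (1 - t ^ (m + 1)) • (Q * w ^ (m + 1)) := by
        rw [ih, mul_add, mul_smul_comm, mul_smul_comm, ← mul_assoc, ← mul_assoc, hQw.symm.eq,
          mul_assoc Q, ← pow_succ']
      _ = t ^ (m + 2) • (z * w ^ (m + 2)) + (1 - t ^ (m + 2)) • (Q * w ^ (m + 1)) := by
        rw [hwz, add_mul, smul_mul_assoc, smul_mul_assoc, mul_assoc, ← pow_succ']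
        module

theorem isNormalOrderedSum_pow_mul_pow (hQz : Commute Q z) (hQw : Commute Q w)
    (hwz : w * z = t • (z * w) + (1 - t) • Q) (m p : ℕ) :
    IsNormalOrderedSum t z w Q m p (w ^ m * z ^ p) := by
  induction p generalizing m with
  | zero => exact ⟨1, by simp⟩
  | succ p ih =>
    cases m with
    | zero => exact ⟨1, by simp⟩
    | succ m =>
      have hsplit : w ^ (m + 1) * z ^ (p + 1) =
          (X ^ (m + 1) : R[X]).eval t • (z * (w ^ (m + 1) * z ^ p)) +
            (1 - X ^ (m + 1) : R[X]).eval t • (Q * (w ^ m * z ^ p)) := by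
        rw [pow_succ' z, ← mul_assoc, pow_succ_mul_eq_of_mul_eq hQw hwz, add_mul, smul_mul_assoc,
          smul_mul_assoc, mul_assoc, mul_assoc]
        simp only [eval_pow, eval_X, eval_sub, eval_one]
      rw [hsplit]
      exact ((ih (m + 1)).z_mul.eval_smul _).add (((ih m).Q_mul hQz hQw).eval_smul _)

end NormalOrdering

section Relations

variable {n : ℕ} {q : ℝ}

theorem zEl_mul_zEl_of_lt {k i : Fin n} (h : k < i) :
    zEl n q k * zEl n q i = (q : ℂ) • (zEl n q i * zEl n q k) := by
  simpa only [zEl, map_mul, map_smul] using RingQuot.mkAlgHom_rel ℂ (ZRel.zz (q := q) h)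

theorem wEl_mul_wEl_of_lt {k i : Fin n} (h : k < i) :
    wEl n q i * wEl n q k = (q : ℂ) • (wEl n q k * wEl n q i) := by
  simpa only [wEl, map_mul, map_smul] using RingQuot.mkAlgHom_rel ℂ (ZRel.ww (q := q) h)

theorem wEl_mul_zEl_of_ne {i k : Fin n} (h : i ≠ k) :
    wEl n q i * zEl n q k = (q : ℂ) • (zEl n q k * wEl n q i) := by
  simpa only [zEl, wEl, map_mul, map_smul] using RingQuot.mkAlgHom_rel ℂ (ZRel.wz (q := q) h)

theorem wEl_mul_zEl_self (i : Fin n) :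
    wEl n q i * zEl n q i = zEl n q i * wEl n q i + (1 - (q : ℂ) ^ 2) • QEl n q i := by
  simpa only [zEl, wEl, QEl, map_add, map_mul, map_smul, map_sum, Fin.lt_def] using
    RingQuot.mkAlgHom_rel ℂ (ZRel.wzDiag (q := q) i)

variable (i : Fin n)

theorem QEl_mul_zEl_self : QEl n q i * zEl n q i = ((q : ℂ) ^ 2) • (zEl n q i * QEl n q i) := by
  rw [QEl, Finset.sum_mul, Finset.mul_sum, Finset.smul_sum]
  refine Finset.sum_congr rfl fun k hk => ?_
  have hki : k < i := (Finset.mem_filter.1 hk).2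
  calc zEl n q k * wEl n q k * zEl n q i
      = (q : ℂ) • (zEl n q k * zEl n q i * wEl n q k) := by
        rw [mul_assoc, wEl_mul_zEl_of_ne hki.ne, mul_smul_comm, mul_assoc]
    _ = ((q : ℂ) ^ 2) • (zEl n q i * (zEl n q k * wEl n q k)) := by
        rw [zEl_mul_zEl_of_lt hki, smul_mul_assoc, smul_smul, mul_assoc, sq]

theorem wEl_mul_QEl_self : wEl n q i * QEl n q i = ((q : ℂ) ^ 2) • (QEl n q i * wEl n q i) := by
  rw [QEl, Finset.mul_sum, Finset.sum_mul, Finset.smul_sum]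
  refine Finset.sum_congr rfl fun k hk => ?_
  have hki : k < i := (Finset.mem_filter.1 hk).2
  calc wEl n q i * (zEl n q k * wEl n q k)
      = (q : ℂ) • (zEl n q k * (wEl n q i * wEl n q k)) := by
        rw [← mul_assoc, wEl_mul_zEl_of_ne hki.ne', smul_mul_assoc, mul_assoc]
    _ = ((q : ℂ) ^ 2) • (zEl n q k * wEl n q k * wEl n q i) := by
        rw [wEl_mul_wEl_of_lt hki, mul_smul_comm, smul_smul, mul_assoc, sq]

theorem QEl_val_add_one : QEl n q ((i : ℕ) + 1) = QEl n q i + zEl n q i * wEl n q i := by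
  have hset : Finset.univ.filter (fun k : Fin n => (k : ℕ) < (i : ℕ) + 1)
      = insert i (Finset.univ.filter (fun k : Fin n => (k : ℕ) < i)) := by
    ext k
    simp only [Finset.mem_filter, Finset.mem_univ, true_and, Finset.mem_insert, Fin.ext_iff]
    omega
  rw [QEl, QEl, hset, Finset.sum_insert (by simp), add_comm]

theorem wEl_mul_zEl_self_eq_QEl_val_add_one :
    wEl n q i * zEl n q i =
      ((q : ℂ) ^ 2) • (zEl n q i * wEl n q i) +
        (1 - (q : ℂ) ^ 2) • QEl n q ((i : ℕ) + 1) := by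
  rw [wEl_mul_zEl_self, QEl_val_add_one]
  module

theorem commute_QEl_val_add_one_zEl : Commute (QEl n q ((i : ℕ) + 1)) (zEl n q i) := by
  rw [Commute, SemiconjBy, QEl_val_add_one, add_mul, mul_add, QEl_mul_zEl_self, mul_assoc,
    wEl_mul_zEl_self, mul_add, mul_smul_comm]
  module

theorem commute_QEl_val_add_one_wEl : Commute (QEl n q ((i : ℕ) + 1)) (wEl n q i) := by
  rw [Commute, SemiconjBy, QEl_val_add_one, add_mul, mul_add, wEl_mul_QEl_self, ← mul_assoc,
    wEl_mul_zEl_self, add_mul, smul_mul_assoc]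
  module

end Relations

-- The paper's `Q_i` is `QEl n q (i + 1)`, since `i : Fin n` is 0-based.
theorem wPow_mul_zPow_expansion_general (n : ℕ) (q : ℝ)
    (i : Fin n) (m p : ℕ) :
    ∃ d : ℕ → Polynomial ℂ,
      wEl n q i ^ m * zEl n q i ^ p =
        ∑ k ∈ Finset.range (min m p + 1),
          (d k).eval ((q : ℂ) ^ 2) •
            (zEl n q i ^ (p - k) * wEl n q i ^ (m - k) * QEl n q ((i : ℕ) + 1) ^ k) :=
  isNormalOrderedSum_pow_mul_pow (commute_QEl_val_add_one_zEl i) (commute_QEl_val_add_one_wEl i)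
    (wEl_mul_zEl_self_eq_QEl_val_add_one i) m p

/-- In `Z_n`: `w_i^m z_i^p = ∑_{k=0}^{min(m,p)} d_k z_i^{p−k} w_i^{m−k} Q_i^k` for
coefficients `d_k ∈ ℂ[q²]` (the paper's `Q_i` is `QEl n q ((i : ℕ)+1)`). -/
theorem wPow_mul_zPow_expansion (n : ℕ) (q : ℝ) (h0 : 0 < q) (h1 : q < 1)
    (i : Fin n) (m p : ℕ) :
    ∃ d : ℕ → Polynomial ℂ,
      wEl n q i ^ m * zEl n q i ^ p =
        ∑ k ∈ Finset.range (min m p + 1),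
          (d k).eval ((q : ℂ) ^ 2) •
            (zEl n q i ^ (p - k) * wEl n q i ^ (m - k) * QEl n q ((i : ℕ) + 1) ^ k) :=
  wPow_mul_zPow_expansion_general n q i m p

end
end
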